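/- Let (X,G) be a Polish structure and H a countable group. Let a be a finite tuple of elements of H(X), A a finite subset of H(X), and b a finite tuple of elements of X enumerating ã. Then for every ordinal α: NM(a/A) ≥ α holds in (H(X),G) if and only if NM(b/Ã) ≥ α holds in (X,G); in particular NM(a/A) = NM(b/Ã). -/

import Mathlib

open Function

variable (X H : Type*)

/-- `H(X)`: the direct sum of copies of `H` indexed by `X`, realized as the subgroup of
the product group `X → H` consisting of finitely supported functions. -/
def FinSupp [Group H] : Subgroup (X → H) where
  carrier := {f | (Function.mulSupport f).Finite}
  one_mem' := by simp [Function.mulSupport_one]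
  mul_mem' {f g} hf hg := (hf.union hg).subset (Function.mulSupport_mul f g)
  inv_mem' {f} hf := by simpa [Function.mulSupport_inv] using hf

variable (G : Type*) [Group G] [Group H] [MulAction G X]

/-- The action of `G` on `H(X)` given by `(g • y) x = y (g⁻¹ • x)`. -/
instance : MulAction G ↥(FinSupp X H) where
  smul g y := ⟨fun x => (y : X → H) (g⁻¹ • x), by
    show (Function.mulSupport ((y : X → H) ∘ (fun x => g⁻¹ • x))).Finite
    rw [Function.mulSupport_comp_eq_preimage]
    exact y.2.preimage ((MulAction.injective (g⁻¹ : G)).injOn)⟩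
  one_smul y := Subtype.ext <| funext fun x => by
    show (y : X → H) ((1 : G)⁻¹ • x) = (y : X → H) x
    rw [inv_one, one_smul]
  mul_smul g₁ g₂ y := Subtype.ext <| funext fun x => by
    show (y : X → H) ((g₁ * g₂)⁻¹ • x) = (y : X → H) (g₂⁻¹ • g₁⁻¹ • x)
    rw [mul_inv_rev, mul_smul]

lemma smul_finSupp_apply (g : G) (y : ↥(FinSupp X H)) (x : X) :
    ((g • y : ↥(FinSupp X H)) : X → H) x = (y : X → H) (g⁻¹ • x) := rfl

/-- The pointwise stabilizer of a set `A ⊆ X` in `G`. -/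
def fixPt (G : Type*) [Group G] (X : Type*) [MulAction G X] (A : Set X) : Subgroup G where
  carrier := {g | ∀ x ∈ A, g • x = x}
  one_mem' := fun x _ => one_smul G x
  mul_mem' {a b} ha hb := fun x hx => by rw [mul_smul, hb x hx, ha x hx]
  inv_mem' {a} ha := fun x hx => by
    conv_lhs => rw [← ha x hx]
    rw [inv_smul_smul]

/-- The orbit `o(a/A)` of a finite tuple `a` over a set `A`: the orbit of `a` under the
pointwise stabilizer `G_A`, acting diagonally. -/
def orbitOver (G : Type*) [Group G] (X : Type*) [MulAction G X] {n : ℕ}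
    (A : Set X) (a : Fin n → X) : Set (Fin n → X) :=
  {b | ∃ g ∈ fixPt G X A, (fun i => g • a i) = b}

/-- `a` is nm-independent from `B` over `A` (written `a ⫝_A B`): the set of those `g` in the
pointwise stabilizer `G_A` with `g • a ∈ o(a/A ∪ B)` is non-meager in `G_A` (carrying the
subspace topology from `G`). -/
def NMIndep (G : Type*) [Group G] [TopologicalSpace G] (X : Type*) [MulAction G X]
    {n : ℕ} (a : Fin n → X) (A B : Set X) : Prop :=
  ¬ IsMeagre {g : ↥(fixPt G X A) | (fun i => (g : G) • a i) ∈ orbitOver G X (A ∪ B) a}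

/-- `a ⫝_A B` for a single element `a`. -/
def NMIndep1 (G : Type*) [Group G] [TopologicalSpace G] (X : Type*) [MulAction G X]
    (a : X) (A B : Set X) : Prop :=
  NMIndep G X (fun _ : Fin 1 => a) A B

/-- `Ã ⊆ X` for a set `A ⊆ H(X)`: the union of the supports of the members of `A`. -/
def tildeSet (A : Set ↥(FinSupp X H)) : Set X :=
  ⋃ y ∈ A, Function.mulSupport (y : X → H)

/-- `NM(a/A) ≥ α`, defined by recursion on the ordinal `α`: `NM(a/A) ≥ 0` always holds,
`NM(a/A) ≥ α + 1` iff there is a finite `B` with `A ⊆ B` such that `a` is nm-dependent on `B`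
over `A` and `NM(a/B) ≥ α`, and for limit `λ`, `NM(a/A) ≥ λ` iff `NM(a/A) ≥ α` for all
`α < λ`. -/
noncomputable def NMge (G : Type*) [Group G] [TopologicalSpace G] (X : Type*) [MulAction G X]
    {n : ℕ} (a : Fin n → X) (α : Ordinal) : Set X → Prop :=
  Ordinal.limitRecOn α (fun _ => True)
    (fun _ ih A => ∃ B : Set X, A ⊆ B ∧ B.Finite ∧ ¬ NMIndep G X a A B ∧ ih B)
    (fun o _ ih A => ∀ β (hβ : β < o), ih β hβ A)

/-- `ã ⊆ X` for a finite tuple `a` of elements of `H(X)`: the union of the supports of the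
entries of `a`. -/
def tildeTuple {n : ℕ} (a : Fin n → ↥(FinSupp X H)) : Set X :=
  ⋃ i, Function.mulSupport ((a i : X → H))

/-!
The map `y ↦ ỹ` turns nm-(in)dependence in `(H(X), G)` into nm-(in)dependence in `(X, G)`.
For finite `A ⊆ H(X)` the stabilizer `G_Ã` has finite index in `G_A`, because `G_A` permutes
the finite set `Ã`; and `G_Ã` is closed, hence open in `G_A`. The set of `g ∈ G_A` moving `a`
into `o(a/A ∪ B)` is the product `G_{A∪B} G_{A∪a}`, and passing to the finite-index subgroups
`G_{Ã∪B̃} G_{Ã∪ã}` changes it only by finitely many translates, so meagreness is unaffected.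
Conversely every finite `D ⊇ Ã` is `B̃` for some finite `B ⊇ A` (add to `A` the functions
supported at single points of `D`), unless `H` is trivial, in which case `b` is empty and never
nm-dependent. Induction on `α` finishes the proof.
-/

open scoped Pointwise
open Topology

namespace Subgroup

variable {Γ : Type*} [Group Γ]

lemma exists_finite_subset_mul (K₀ K : Subgroup Γ) [K₀.IsFiniteRelIndex K] :
    ∃ F : Set Γ, F.Finite ∧ (K : Set Γ) ⊆ F * K₀ := by
  refine ⟨Set.range fun q : K ⧸ K₀.subgroupOf K => ((q.out : K) : Γ), Set.finite_range _, ?_⟩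
  intro k hk
  obtain ⟨h, hh⟩ := QuotientGroup.mk_out_eq_mul (K₀.subgroupOf K) ⟨k, hk⟩
  refine Set.mem_mul.2 ⟨_, ⟨(⟨k, hk⟩ : K), rfl⟩, ((h⁻¹ : K₀.subgroupOf K) : K), (h⁻¹).2, ?_⟩
  simp [hh]

lemma IsFiniteRelIndex.subgroupOf {K₀ K W : Subgroup Γ} [K₀.IsFiniteRelIndex K] (hK : K ≤ W) :
    (K₀.subgroupOf W).IsFiniteRelIndex (K.subgroupOf W) :=
  ⟨(relIndex_subgroupOf hK).trans_ne relIndex_ne_zero⟩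

lemma preimage_val_mul_eq {W K H : Subgroup Γ} (hK : K ≤ W) (hH : H ≤ W) :
    ((↑) ⁻¹' ((K : Set Γ) * (H : Set Γ)) : Set W) =
      (K.subgroupOf W : Set W) * (H.subgroupOf W : Set W) := by
  ext g
  constructor
  · rintro ⟨k, hk, h, hh, hg⟩
    exact ⟨⟨k, hK hk⟩, hk, ⟨h, hH hh⟩, hh, Subtype.ext hg⟩
  · rintro ⟨k, hk, h, hh, rfl⟩
    exact ⟨k, hk, h, hh, rfl⟩

end Subgroup

section Meagre

variable {Γ : Type*} [Group Γ] [TopologicalSpace Γ] [IsTopologicalGroup Γ]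

lemma IsMeagre.finite_mul {F S : Set Γ} (hS : IsMeagre S) (hF : F.Finite) :
    IsMeagre (F * S) := by
  rw [← Set.iUnion_mul_left_image]
  exact isMeagre_biUnion hF.countable fun t _ =>
    (Homeomorph.mulLeft t).isInducing.isMeagre_image hS

lemma IsMeagre.mul_finite {S F : Set Γ} (hS : IsMeagre S) (hF : F.Finite) :
    IsMeagre (S * F) := by
  rw [← Set.iUnion_mul_right_image]
  exact isMeagre_biUnion hF.countable fun f _ =>
    (Homeomorph.mulRight f).isInducing.isMeagre_image hS

theorem isMeagre_mul_iff_of_isFiniteRelIndex {K₀ K H₀ H : Subgroup Γ} (hK : K₀ ≤ K)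
    (hH : H₀ ≤ H) [K₀.IsFiniteRelIndex K] [H₀.IsFiniteRelIndex H] :
    IsMeagre ((K : Set Γ) * (H : Set Γ)) ↔ IsMeagre ((K₀ : Set Γ) * (H₀ : Set Γ)) := by
  refine ⟨fun h => h.mono (Set.mul_subset_mul hK hH), fun h => ?_⟩
  obtain ⟨F₁, hF₁, hKF⟩ := K₀.exists_finite_subset_mul K
  obtain ⟨F₂, hF₂, hHF⟩ := H₀.exists_finite_subset_mul H
  have hHF' : (H : Set Γ) ⊆ (H₀ : Set Γ) * F₂⁻¹ := by
    rw [← inv_coe_set (H := H), ← inv_coe_set (H := H₀), ← mul_inv_rev]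
    exact Set.inv_subset_inv.2 hHF
  refine ((h.finite_mul hF₁).mul_finite hF₂.inv).mono ?_
  calc (K : Set Γ) * (H : Set Γ) ⊆ F₁ * (K₀ : Set Γ) * ((H₀ : Set Γ) * F₂⁻¹) :=
        Set.mul_subset_mul hKF hHF'
    _ = F₁ * ((K₀ : Set Γ) * (H₀ : Set Γ)) * F₂⁻¹ := by simp only [mul_assoc]

theorem isMeagre_preimage_val_iff_of_isFiniteRelIndex {V W : Subgroup Γ} (hVW : V ≤ W)
    (hV : IsClosed (V : Set Γ)) [V.IsFiniteRelIndex W] {S : Set Γ} (hS : S ⊆ V) :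
    IsMeagre ((↑) ⁻¹' S : Set W) ↔ IsMeagre ((↑) ⁻¹' S : Set V) := by
  have hopen : IsOpenEmbedding (Subgroup.inclusion hVW) := by
    refine ⟨IsEmbedding.inclusion hVW, ?_⟩
    rw [← MonoidHom.coe_range, Subgroup.inclusion_range]
    exact (V.subgroupOf W).isOpen_of_isClosed_of_finiteIndex
      (hV.preimage continuous_subtype_val)
  refine ⟨fun h => h.preimage_of_isOpenMap hopen.continuous hopen.isOpenMap, fun h => ?_⟩
  convert hopen.isInducing.isMeagre_image h
  ext g
  exact ⟨fun hg => ⟨⟨g, hS hg⟩, hg, rfl⟩, by rintro ⟨v, hv, rfl⟩; exact hv⟩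

end Meagre

section Stabilizers

variable {X G}

@[simp]
lemma mem_fixPt {Y : Type*} [MulAction G Y] {C : Set Y} {g : G} :
    g ∈ fixPt G Y C ↔ ∀ x ∈ C, g • x = x := Iff.rfl

lemma fixPt_anti {Y : Type*} [MulAction G Y] {C D : Set Y} (h : C ⊆ D) :
    fixPt G Y D ≤ fixPt G Y C := fun _ hg x hx => hg x (h hx)

lemma isClosed_fixPt [TopologicalSpace G] (hstab : ∀ x : X, IsClosed {g : G | g • x = x})
    (C : Set X) : IsClosed (fixPt G X C : Set G) := by
  convert isClosed_biInter fun x (_ : x ∈ C) => hstab x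
  ext
  simp

lemma setOf_smul_mem_orbitOver {Y : Type*} [MulAction G Y] {n : ℕ} (c : Fin n → Y)
    (A B : Set Y) :
    {g : fixPt G Y A | (fun i => (g : G) • c i) ∈ orbitOver G Y (A ∪ B) c} =
      (↑) ⁻¹' ((fixPt G Y (A ∪ B) : Set G) * (fixPt G Y (A ∪ Set.range c) : Set G)) := by
  ext ⟨g, hg⟩
  constructor
  · rintro ⟨k, hk, hkg⟩
    refine ⟨k, hk, k⁻¹ * g, ?_, mul_inv_cancel_left k g⟩
    rintro y (hy | ⟨i, rfl⟩)
    · rw [mul_smul, hg y hy, inv_smul_eq_iff, hk y (Or.inl hy)]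
    · rw [mul_smul, inv_smul_eq_iff, ← congrFun hkg i]
  · rintro ⟨k, hk, h, hh, rfl⟩
    exact ⟨k, hk, funext fun i => by rw [mul_smul, hh (c i) (Or.inr ⟨i, rfl⟩)]⟩

end Stabilizers

section Supports

variable {X H G}

lemma tildeSet_union (A B : Set (FinSupp X H)) :
    tildeSet X H (A ∪ B) = tildeSet X H A ∪ tildeSet X H B :=
  Set.biUnion_union _ _ _

lemma tildeSet_range {n : ℕ} (a : Fin n → FinSupp X H) :
    tildeSet X H (Set.range a) = tildeTuple X H a :=
  Set.biUnion_range

lemma tildeSet_mono {A B : Set (FinSupp X H)} (h : A ⊆ B) : tildeSet X H A ⊆ tildeSet X H B :=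
  Set.biUnion_subset_biUnion_left h

lemma Set.Finite.tildeSet {A : Set (FinSupp X H)} (h : A.Finite) : (tildeSet X H A).Finite :=
  h.biUnion fun y _ => y.2

lemma tildeTuple_eq_empty [Subsingleton H] {n : ℕ} (a : Fin n → FinSupp X H) :
    tildeTuple X H a = ∅ :=
  Set.iUnion_eq_empty.2 fun _ =>
    mulSupport_eq_empty_iff.2 (funext fun _ => Subsingleton.elim _ _)

lemma exists_tildeSet_eq [Nontrivial H] {A : Set (FinSupp X H)} (hA : A.Finite) {D : Set X}
    (hD : D.Finite) (hAD : tildeSet X H A ⊆ D) :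
    ∃ B : Set (FinSupp X H), A ⊆ B ∧ B.Finite ∧ tildeSet X H B = D := by
  classical
  obtain ⟨h, hh⟩ := exists_ne (1 : H)
  let δ : X → FinSupp X H := fun x =>
    ⟨Pi.mulSingle x h, (Set.finite_singleton x).subset Pi.mulSupport_mulSingle_subset⟩
  refine ⟨A ∪ δ '' D, Set.subset_union_left, hA.union (hD.image δ), ?_⟩
  have hδ : tildeSet X H (δ '' D) = D := by
    simp only [tildeSet, Set.biUnion_image, δ, Pi.mulSupport_mulSingle_of_ne hh,
      Set.biUnion_of_singleton]
  rw [tildeSet_union, hδ, Set.union_eq_self_of_subset_left hAD]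

lemma smul_eq_self_of_forall_mem_mulSupport {g : G} {y : FinSupp X H}
    (h : ∀ x ∈ mulSupport (y : X → H), g • x = x) : g • y = y := by
  refine Subtype.ext (funext fun x => ?_)
  change (y : X → H) (g⁻¹ • x) = (y : X → H) x
  by_cases hx : g⁻¹ • x ∈ mulSupport (y : X → H)
  · conv_rhs => rw [← smul_inv_smul g x, h _ hx]
  · by_cases hx' : x ∈ mulSupport (y : X → H)
    · rw [inv_smul_eq_iff.2 (h x hx').symm]
    · rw [notMem_mulSupport.1 hx, notMem_mulSupport.1 hx']

lemma fixPt_tildeSet_le (A : Set (FinSupp X H)) :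
    fixPt G X (tildeSet X H A) ≤ fixPt G (FinSupp X H) A := fun _ hg _ hy =>
  smul_eq_self_of_forall_mem_mulSupport fun x hx => hg x (Set.mem_biUnion hy hx)

lemma smul_mem_tildeSet {A : Set (FinSupp X H)} {g : G} (hg : g ∈ fixPt G (FinSupp X H) A)
    {x : X} (hx : x ∈ tildeSet X H A) : g • x ∈ tildeSet X H A := by
  obtain ⟨y, hy, hxy⟩ := Set.mem_iUnion₂.1 hx
  refine Set.mem_biUnion hy ?_
  have hgy := congrFun (congrArg Subtype.val (hg y hy)) (g • x)
  rw [smul_finSupp_apply, inv_smul_smul] at hgy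
  rwa [mem_mulSupport, ← hgy]

lemma isFiniteRelIndex_fixPt_tildeSet {A : Set (FinSupp X H)} (hA : A.Finite) :
    (fixPt G X (tildeSet X H A)).IsFiniteRelIndex (fixPt G (FinSupp X H) A) := by
  set W := fixPt G (FinSupp X H) A
  have hC := hA.tildeSet
  have : Finite (tildeSet X H A) := hC.to_subtype
  have hfin (x : X) (hx : x ∈ tildeSet X H A) : (MulAction.stabilizer W x).FiniteIndex := by
    have horbit : MulAction.orbit W x ⊆ tildeSet X H A := by
      rintro _ ⟨g, rfl⟩
      exact smul_mem_tildeSet g.2 hx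
    refine ⟨?_⟩
    rw [MulAction.index_stabilizer]
    exact ((Set.ncard_pos (hC.subset horbit)).2 (MulAction.nonempty_orbit x)).ne'
  have heq : (fixPt G X (tildeSet X H A)).subgroupOf W =
      ⨅ x : tildeSet X H A, MulAction.stabilizer W (x : X) := by
    ext g
    simp [Subgroup.mem_subgroupOf, Subgroup.mem_iInf, MulAction.mem_stabilizer_iff,
      Subgroup.smul_def]
  rw [Subgroup.isFiniteRelIndex_iff_finiteIndex, heq]
  exact Subgroup.finiteIndex_iInf fun x => hfin x x.2

end Supports

section NMRank

variable {X H G} [TopologicalSpace G]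

lemma nmge_zero {Y : Type*} [MulAction G Y] {n : ℕ} (c : Fin n → Y) (A : Set Y) :
    NMge G Y c 0 A := by
  simp [NMge, Ordinal.limitRecOn_zero]

lemma nmge_add_one {Y : Type*} [MulAction G Y] {n : ℕ} (c : Fin n → Y) (o : Ordinal)
    (A : Set Y) :
    NMge G Y c (o + 1) A ↔
      ∃ B : Set Y, A ⊆ B ∧ B.Finite ∧ ¬ NMIndep G Y c A B ∧ NMge G Y c o B := by
  rw [NMge, Ordinal.limitRecOn_add_one]
  rfl

lemma nmge_of_isSuccLimit {Y : Type*} [MulAction G Y] {n : ℕ} (c : Fin n → Y) {o : Ordinal}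
    (ho : Order.IsSuccLimit o) (A : Set Y) :
    NMge G Y c o A ↔ ∀ β < o, NMge G Y c β A := by
  rw [NMge, Ordinal.limitRecOn_limit _ _ _ _ ho]
  rfl

lemma nmIndep_of_isEmpty [PolishSpace G]
    (hstab : ∀ x : X, IsClosed {g : G | g • x = x}) {m : ℕ} [IsEmpty (Fin m)]
    (b : Fin m → X) (A B : Set X) : NMIndep G X b A B := by
  have : PolishSpace (fixPt G X A) := (isClosed_fixPt hstab A).polishSpace
  have huniv : ¬ IsMeagre (Set.univ : Set (fixPt G X A)) :=
    not_isMeagre_of_isOpen isOpen_univ Set.univ_nonempty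
  unfold NMIndep
  convert huniv
  exact Set.eq_univ_of_forall fun _ => ⟨1, one_mem _, funext isEmptyElim⟩

variable [IsTopologicalGroup G]

theorem nmIndep_iff_tildeSet (hstab : ∀ x : X, IsClosed {g : G | g • x = x}) {n m : ℕ}
    (a : Fin n → FinSupp X H) (b : Fin m → X) (hb : Set.range b = tildeTuple X H a)
    {A B : Set (FinSupp X H)} (hA : A.Finite) (hB : B.Finite) :
    NMIndep G (FinSupp X H) a A B ↔ NMIndep G X b (tildeSet X H A) (tildeSet X H B) := by
  have hKW : fixPt G (FinSupp X H) (A ∪ B) ≤ fixPt G (FinSupp X H) A :=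
    fixPt_anti Set.subset_union_left
  have hLW : fixPt G (FinSupp X H) (A ∪ Set.range a) ≤ fixPt G (FinSupp X H) A :=
    fixPt_anti Set.subset_union_left
  have := isFiniteRelIndex_fixPt_tildeSet (G := G) hA
  have := (isFiniteRelIndex_fixPt_tildeSet (G := G) (hA.union hB)).subgroupOf hKW
  have := (isFiniteRelIndex_fixPt_tildeSet (G := G)
    (hA.union (Set.finite_range a))).subgroupOf hLW
  have hsub : (fixPt G X (tildeSet X H (A ∪ B)) : Set G) *
      (fixPt G X (tildeSet X H (A ∪ Set.range a)) : Set G) ⊆ fixPt G X (tildeSet X H A) :=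
    Set.mul_subset_iff.2 fun k hk l hl => mul_mem
      (fixPt_anti (tildeSet_mono Set.subset_union_left) hk)
      (fixPt_anti (tildeSet_mono Set.subset_union_left) hl)
  unfold NMIndep
  rw [not_iff_not, setOf_smul_mem_orbitOver, setOf_smul_mem_orbitOver, hb, ← tildeSet_range,
    ← tildeSet_union, ← tildeSet_union,
    ← isMeagre_preimage_val_iff_of_isFiniteRelIndex (fixPt_tildeSet_le A)
      (isClosed_fixPt hstab _) hsub,
    Subgroup.preimage_val_mul_eq hKW hLW,
    Subgroup.preimage_val_mul_eq ((fixPt_tildeSet_le _).trans hKW)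
      ((fixPt_tildeSet_le _).trans hLW)]
  exact isMeagre_mul_iff_of_isFiniteRelIndex (Subgroup.subgroupOf_mono _ (fixPt_tildeSet_le _))
    (Subgroup.subgroupOf_mono _ (fixPt_tildeSet_le _))

theorem nmge_iff_tildeSet [PolishSpace G] (hstab : ∀ x : X, IsClosed {g : G | g • x = x})
    {n m : ℕ} (a : Fin n → FinSupp X H) (b : Fin m → X) (hb : Set.range b = tildeTuple X H a)
    (α : Ordinal) {A : Set (FinSupp X H)} (hA : A.Finite) :
    NMge G (FinSupp X H) a α A ↔ NMge G X b α (tildeSet X H A) := by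
  induction α using Ordinal.limitRecOn generalizing A with
  | zero => exact iff_of_true (nmge_zero a A) (nmge_zero b _)
  | add_one o ih =>
    rw [nmge_add_one, nmge_add_one]
    constructor
    · rintro ⟨B, hAB, hB, hdep, hge⟩
      exact ⟨tildeSet X H B, tildeSet_mono hAB, hB.tildeSet,
        fun h => hdep ((nmIndep_iff_tildeSet hstab a b hb hA hB).2 h), (ih hB).1 hge⟩
    · rintro ⟨D, hAD, hD, hdep, hge⟩
      rcases subsingleton_or_nontrivial H with _ | _
      · have : IsEmpty (Fin m) := Set.range_eq_empty_iff.1 (hb.trans (tildeTuple_eq_empty a))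
        exact absurd (nmIndep_of_isEmpty hstab b _ D) hdep
      · obtain ⟨B, hAB, hB, rfl⟩ := exists_tildeSet_eq hA hD hAD
        exact ⟨B, hAB, hB, fun h => hdep ((nmIndep_iff_tildeSet hstab a b hb hA hB).1 h),
          (ih hB).2 hge⟩
  | limit o ho ih =>
    rw [nmge_of_isSuccLimit a ho, nmge_of_isSuccLimit b ho]
    exact forall₂_congr fun β hβ => ih β hβ hA

end NMRank

theorem statement4 [TopologicalSpace G] [IsTopologicalGroup G] [PolishSpace G]
    (hstab : ∀ x : X, IsClosed {g : G | g • x = x})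
    {n m : ℕ} (a : Fin n → ↥(FinSupp X H)) (A : Finset ↥(FinSupp X H))
    (b : Fin m → X) (hb : Set.range b = tildeTuple X H a) :
    ∀ α : Ordinal,
      NMge G ↥(FinSupp X H) a α (A : Set ↥(FinSupp X H)) ↔
        NMge G X b α (tildeSet X H (A : Set ↥(FinSupp X H))) :=
  fun α => nmge_iff_tildeSet hstab a b hb α A.finite_toSet
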